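/- arXiv:0704.1358 — 6 statements merged into one kernel-verified Lean document; each statement's English description precedes it below -/
import Mathlib

section
/- There exists a distance-increasing mapping from Z_3^3 to S_5, i.e., an injective map F : Z_3^3 → S_5 such that for all distinct x, y ∈ Z_3^3, d_H(F(x), F(y)) > d_H(x, y), where permutations are compared as 5-tuples of values. Moreover F can be chosen so that F(x)_5 ∉ {1, 2} for all x. -/
/-!
The witness is an explicit table (values `0, …, 4` of `Fin 5` stand for `1, …, 5`), and its
properties are finite checks decided by the kernel. Injectivity needs no separate check: a map
that strictly increases Hamming distance is injective.
-/

theorem Function.Injective.of_hammingDist_lt {ι κ : Type*} [Fintype ι] [Fintype κ]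
    {A : ι → Type*} {B : κ → Type*} [∀ i, DecidableEq (A i)] [∀ k, DecidableEq (B k)]
    {f : (∀ i, A i) → ∀ k, B k}
    (hf : ∀ x y, x ≠ y → hammingDist x y < hammingDist (f x) (f y)) : Function.Injective f := by
  intro x y hxy
  by_contra hne
  simpa [hxy] using hf x y hne

def distIncreasingTable : Fin 3 → Fin 3 → Fin 3 → Fin 5 → Fin 5
  | 0, 0, 0 => ![0, 4, 3, 1, 2]
  | 0, 0, 1 => ![3, 1, 4, 0, 2]
  | 0, 0, 2 => ![0, 3, 4, 1, 2]
  | 0, 1, 0 => ![2, 0, 1, 3, 4]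
  | 0, 1, 1 => ![3, 4, 1, 0, 2]
  | 0, 1, 2 => ![4, 3, 0, 1, 2]
  | 0, 2, 0 => ![1, 4, 0, 3, 2]
  | 0, 2, 1 => ![1, 0, 3, 4, 2]
  | 0, 2, 2 => ![1, 3, 0, 4, 2]
  | 1, 0, 0 => ![0, 1, 2, 4, 3]
  | 1, 0, 1 => ![2, 1, 4, 0, 3]
  | 1, 0, 2 => ![0, 2, 1, 4, 3]
  | 1, 1, 0 => ![2, 4, 0, 1, 3]
  | 1, 1, 1 => ![2, 4, 1, 0, 3]
  | 1, 1, 2 => ![4, 0, 2, 1, 3]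
  | 1, 2, 0 => ![1, 0, 4, 2, 3]
  | 1, 2, 1 => ![1, 4, 2, 0, 3]
  | 1, 2, 2 => ![4, 1, 0, 2, 3]
  | 2, 0, 0 => ![0, 1, 2, 3, 4]
  | 2, 0, 1 => ![3, 1, 2, 0, 4]
  | 2, 0, 2 => ![0, 1, 3, 2, 4]
  | 2, 1, 0 => ![3, 0, 1, 2, 4]
  | 2, 1, 1 => ![3, 2, 0, 1, 4]
  | 2, 1, 2 => ![0, 3, 1, 2, 4]
  | 2, 2, 0 => ![1, 2, 3, 0, 4]
  | 2, 2, 1 => ![1, 3, 2, 0, 4]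
  | 2, 2, 2 => ![1, 3, 0, 2, 4]

def distIncreasingFun (x : Fin 3 → Fin 3) : Fin 5 → Fin 5 :=
  distIncreasingTable (x 0) (x 1) (x 2)

theorem distIncreasingFun_bijective : ∀ x, (distIncreasingFun x).Bijective := by
  decide

noncomputable def distIncreasingPerm (x : Fin 3 → Fin 3) : Equiv.Perm (Fin 5) :=
  Equiv.ofBijective _ (distIncreasingFun_bijective x)

theorem hammingDist_lt_distIncreasingPerm :
    ∀ x y : Fin 3 → Fin 3, x ≠ y →
      hammingDist x y < hammingDist ⇑(distIncreasingPerm x) ⇑(distIncreasingPerm y) := by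
  unfold distIncreasingPerm
  decide

theorem two_le_distIncreasingPerm_four :
    ∀ x : Fin 3 → Fin 3, 2 ≤ distIncreasingPerm x 4 := by
  unfold distIncreasingPerm
  decide

theorem stmt_6 :
    ∃ F : (Fin 3 → Fin 3) → Equiv.Perm (Fin 5),
      Function.Injective F ∧
      (∀ x y : Fin 3 → Fin 3, x ≠ y → hammingDist x y < hammingDist ⇑(F x) ⇑(F y)) ∧
      (∀ x, ((F x 4 : Fin 5) : ℕ) + 1 ≠ 1 ∧ ((F x 4 : Fin 5) : ℕ) + 1 ≠ 2) := by
  refine ⟨distIncreasingPerm, ?_, hammingDist_lt_distIncreasingPerm, fun x => ?_⟩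
  · exact Function.Injective.of_hammingDist_lt (f := fun x => ⇑(distIncreasingPerm x))
      hammingDist_lt_distIncreasingPerm |>.of_comp
  · have := two_le_distIncreasingPerm_four x
    omega
end

section
/- There exists an injective map R : Z_3^3 → S_5 such that: (i) for every x ∈ Z_3^3, 1 ∈ {R(x)_1, R(x)_2, R(x)_3}; (ii) for every x, R(x)_5 ≠ 5; (iii) for every distinct x, y ∈ Z_3^3, the Hamming distance between the 3-tuples obtained from R(x) and R(y) by deleting coordinates 4 and 5 is at least d_H(x, y). -/
/-!
The map is an explicit table; each required property is a finite check over the 27 ternary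
words, carried out by kernel evaluation.
-/

open Function

/-- Entries are shifted down by one: the value `k : Fin 5` stands for the paper's `k + 1`. -/
def ternaryPermTable (x : Fin 3 → Fin 3) : Fin 5 → Fin 5 :=
  ![![![![2, 1, 0, 4, 3], ![2, 3, 0, 4, 1], ![1, 2, 0, 4, 3]],
      ![![3, 1, 0, 4, 2], ![3, 4, 0, 1, 2], ![1, 4, 0, 2, 3]],
      ![![4, 1, 0, 2, 3], ![4, 3, 0, 1, 2], ![4, 2, 0, 1, 3]]],
    ![![![0, 1, 4, 2, 3], ![0, 3, 4, 1, 2], ![0, 2, 4, 1, 3]],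
      ![![0, 1, 2, 4, 3], ![0, 4, 1, 2, 3], ![0, 4, 2, 1, 3]],
      ![![0, 1, 3, 4, 2], ![0, 3, 1, 4, 2], ![0, 2, 3, 4, 1]]],
    ![![![2, 0, 4, 1, 3], ![2, 0, 1, 4, 3], ![1, 0, 4, 2, 3]],
      ![![3, 0, 2, 4, 1], ![3, 0, 1, 4, 2], ![1, 0, 2, 4, 3]],
      ![![4, 0, 3, 1, 2], ![4, 0, 1, 2, 3], ![1, 0, 3, 4, 2]]]] (x 0) (x 1) (x 2)

theorem ternaryPermTable_apply_injective : ∀ x, Injective (ternaryPermTable x) := by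
  decide +kernel

theorem ternaryPermTable_injective : Injective ternaryPermTable := by
  decide +kernel

theorem exists_ternaryPermTable_eq_zero :
    ∀ x, ∃ i : Fin 5, (i : ℕ) < 3 ∧ ternaryPermTable x i = 0 := by
  decide +kernel

theorem ternaryPermTable_four_ne_four : ∀ x, ternaryPermTable x 4 ≠ 4 := by
  decide +kernel

theorem hammingDist_le_card_ternaryPermTable_ne :
    ∀ x y : Fin 3 → Fin 3, hammingDist x y ≤
      (Finset.univ.filter fun i : Fin 5 =>
        (i : ℕ) < 3 ∧ ternaryPermTable x i ≠ ternaryPermTable y i).card := by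
  decide +kernel

noncomputable def ternaryPerm (x : Fin 3 → Fin 3) : Equiv.Perm (Fin 5) :=
  Equiv.ofBijective _ (ternaryPermTable_apply_injective x).bijective_of_finite

theorem coe_ternaryPerm (x : Fin 3 → Fin 3) : ⇑(ternaryPerm x) = ternaryPermTable x := rfl

theorem ternaryPerm_injective : Injective ternaryPerm :=
  Injective.of_comp (f := DFunLike.coe) ternaryPermTable_injective

theorem stmt_7 :
    ∃ R : (Fin 3 → Fin 3) → Equiv.Perm (Fin 5),
      Function.Injective R ∧
      (∀ x, ∃ i : Fin 5, (i : ℕ) < 3 ∧ ((R x i : Fin 5) : ℕ) + 1 = 1) ∧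
      (∀ x, ((R x 4 : Fin 5) : ℕ) + 1 ≠ 5) ∧
      (∀ x y : Fin 3 → Fin 3, x ≠ y →
        hammingDist x y ≤
          (Finset.univ.filter fun i : Fin 5 => (i : ℕ) < 3 ∧ R x i ≠ R y i).card) := by
  refine ⟨ternaryPerm, ternaryPerm_injective, fun x => ?_, fun x => ?_,
    fun x y _ => hammingDist_le_card_ternaryPermTable_ne x y⟩
  · obtain ⟨i, hi, hzero⟩ := exists_ternaryPermTable_eq_zero x
    exact ⟨i, hi, by simp [coe_ternaryPerm, hzero]⟩
  · have := ternaryPermTable_four_ne_four x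
    rw [coe_ternaryPerm]
    omega
end

section
/- There exists an injective map S : Z_3^3 → S_5 such that: (i) for every x ∈ Z_3^3, 2 ∈ {S(x)_1, S(x)_2, S(x)_3}; (ii) for every x, S(x)_5 ≠ 1; (iii) for every distinct x, y ∈ Z_3^3, the Hamming distance between S(x) and S(y) restricted to coordinates {1,2,3} is at least d_H(x, y). -/
/-!
The witness is an explicit table of 27 permutations, written 0-indexed (the paper's symbol `k` is
`k - 1` here). Each required property is a finite check over `Z_3^3`, or over pairs of its points,
that the kernel decides; injectivity follows from property (iii), because distinct points of
`Z_3^3` are at positive Hamming distance.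
-/

open Finset

def codeTable : Fin 3 → Fin 3 → Fin 3 → Fin 5 → Fin 5 :=
![
  ![![![3, 0, 1, 2, 4], ![2, 1, 0, 3, 4], ![1, 4, 0, 2, 3]],
    ![![3, 4, 1, 0, 2], ![3, 1, 2, 0, 4], ![1, 4, 2, 0, 3]],
    ![![3, 2, 1, 0, 4], ![3, 1, 0, 2, 4], ![1, 2, 0, 3, 4]]],
  ![![![2, 0, 1, 3, 4], ![2, 1, 4, 0, 3], ![1, 0, 4, 2, 3]],
    ![![0, 3, 1, 2, 4], ![0, 1, 2, 3, 4], ![1, 3, 4, 0, 2]],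
    ![![0, 2, 1, 3, 4], ![0, 1, 4, 2, 3], ![1, 2, 4, 0, 3]]],
  ![![![4, 0, 1, 2, 3], ![2, 1, 3, 0, 4], ![1, 0, 3, 2, 4]],
    ![![4, 3, 1, 0, 2], ![4, 1, 2, 0, 3], ![1, 3, 2, 0, 4]],
    ![![4, 2, 1, 0, 3], ![4, 1, 3, 0, 2], ![1, 2, 3, 0, 4]]]]

def codeFun (x : Fin 3 → Fin 3) : Fin 5 → Fin 5 :=
  codeTable (x 0) (x 1) (x 2)

set_option maxHeartbeats 4000000 in
theorem codeFun_injective (x : Fin 3 → Fin 3) : Function.Injective (codeFun x) := by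
  revert x
  decide

noncomputable def codePerm (x : Fin 3 → Fin 3) : Equiv.Perm (Fin 5) :=
  Equiv.ofBijective (codeFun x) (codeFun_injective x).bijective_of_finite

theorem codePerm_apply (x : Fin 3 → Fin 3) (i : Fin 5) : codePerm x i = codeFun x i :=
  rfl

theorem injective_of_hammingDist_le_card_filter_ne {ι β κ : Type*} [Fintype ι] [DecidableEq β]
    [Fintype κ] [DecidableEq κ] (p : κ → Prop) [DecidablePred p]
    (S : (ι → β) → Equiv.Perm κ)
    (hS : ∀ x y, x ≠ y → hammingDist x y ≤ #{i | p i ∧ S x i ≠ S y i}) :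
    Function.Injective S := by
  intro x y hxy
  by_contra hne
  exact hne (by simpa [hxy] using hS x y hne)

theorem codePerm_contains_one (x : Fin 3 → Fin 3) :
    ∃ i : Fin 5, (i : ℕ) < 3 ∧ ((codePerm x i : Fin 5) : ℕ) + 1 = 2 := by
  simp only [codePerm_apply]
  revert x
  decide

theorem codePerm_four_ne_zero (x : Fin 3 → Fin 3) : ((codePerm x 4 : Fin 5) : ℕ) + 1 ≠ 1 := by
  simp only [codePerm_apply]
  revert x
  decide

set_option maxHeartbeats 4000000 in
theorem hammingDist_le_card_codePerm_ne (x y : Fin 3 → Fin 3) :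
    hammingDist x y ≤ #{i : Fin 5 | (i : ℕ) < 3 ∧ codePerm x i ≠ codePerm y i} := by
  simp only [codePerm_apply]
  revert x y
  decide

theorem stmt_8 :
    ∃ S : (Fin 3 → Fin 3) → Equiv.Perm (Fin 5),
      Function.Injective S ∧
      (∀ x, ∃ i : Fin 5, (i : ℕ) < 3 ∧ ((S x i : Fin 5) : ℕ) + 1 = 2) ∧
      (∀ x, ((S x 4 : Fin 5) : ℕ) + 1 ≠ 1) ∧
      (∀ x y : Fin 3 → Fin 3, x ≠ y →
        hammingDist x y ≤
          (Finset.univ.filter fun i : Fin 5 => (i : ℕ) < 3 ∧ S x i ≠ S y i).card) :=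
  have hdist (x y : Fin 3 → Fin 3) (_ : x ≠ y) := hammingDist_le_card_codePerm_ne x y
  ⟨codePerm, injective_of_hammingDist_le_card_filter_ne _ codePerm hdist,
    codePerm_contains_one, codePerm_four_ne_zero, hdist⟩
end

section
/- There exists an injective map H : Z_3^4 → S_6 such that: (i) for every u ∈ Z_3^4, 1 ∈ {H(u)_1, H(u)_2, H(u)_3}; (ii) for every distinct u, v ∈ Z_3^4, the Hamming distance between H(u) and H(v) restricted to coordinates {1,2,3,4} is at least d_H(u, v). -/
/-! `H` is an explicit table of 81 permutations, and conditions (i) and (ii) are checked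
exhaustively. Row `a` is the image of the vector with base-3 digits `a` (least significant
first, as in `finFunctionFinEquiv`), and symbol `k : Fin 6` stands for `k + 1 ∈ {1, …, 6}`.
Injectivity needs no check: distinct vectors have positive Hamming distance, so by (ii) their
images differ in some coordinate. -/

open Finset

theorem ne_of_hammingDist_le_card_filter {ι κ β γ : Type*} [Fintype ι] [Fintype κ]
    [DecidableEq β] [DecidableEq γ] {p : κ → Prop} [DecidablePred p] {u v : ι → β}
    {f g : κ → γ} (huv : u ≠ v) (h : hammingDist u v ≤ #{i | p i ∧ f i ≠ g i}) : f ≠ g := by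
  obtain ⟨i, hi⟩ := card_pos.mp ((hammingDist_pos.mpr huv).trans_le h)
  exact fun hfg => (mem_filter.mp hi).2.2 (congrFun hfg i)

def witnessRow : Fin (3 ^ 4) → Fin 6 → Fin 6 :=
  ![![0, 3, 5, 1, 2, 4],
    ![0, 5, 4, 3, 1, 2],
    ![0, 1, 4, 3, 2, 5],
    ![0, 3, 4, 1, 2, 5],
    ![0, 3, 4, 5, 1, 2],
    ![0, 1, 4, 5, 2, 3],
    ![0, 5, 3, 1, 2, 4],
    ![0, 5, 4, 2, 1, 3],
    ![0, 1, 4, 2, 3, 5],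
    ![0, 4, 5, 1, 2, 3],
    ![0, 4, 5, 3, 1, 2],
    ![0, 1, 5, 3, 2, 4],
    ![0, 4, 2, 1, 3, 5],
    ![0, 4, 2, 5, 1, 3],
    ![0, 1, 2, 5, 3, 4],
    ![0, 4, 3, 1, 2, 5],
    ![0, 4, 3, 2, 1, 5],
    ![0, 1, 3, 2, 4, 5],
    ![0, 2, 5, 1, 3, 4],
    ![0, 2, 1, 3, 4, 5],
    ![0, 1, 5, 4, 2, 3],
    ![0, 3, 1, 4, 2, 5],
    ![0, 2, 1, 5, 3, 4],
    ![0, 1, 2, 4, 3, 5],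
    ![0, 2, 3, 1, 4, 5],
    ![0, 2, 3, 4, 1, 5],
    ![0, 1, 3, 4, 2, 5],
    ![3, 0, 4, 1, 2, 5],
    ![1, 0, 4, 3, 2, 5],
    ![2, 0, 4, 3, 1, 5],
    ![3, 0, 4, 5, 1, 2],
    ![1, 0, 4, 5, 2, 3],
    ![2, 0, 4, 5, 1, 3],
    ![3, 0, 4, 2, 1, 5],
    ![1, 0, 4, 2, 3, 5],
    ![5, 0, 4, 2, 1, 3],
    ![4, 0, 5, 3, 1, 2],
    ![1, 0, 5, 3, 2, 4],
    ![2, 0, 5, 3, 1, 4],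
    ![3, 0, 2, 5, 1, 4],
    ![1, 0, 2, 5, 3, 4],
    ![4, 0, 2, 5, 1, 3],
    ![4, 0, 3, 2, 1, 5],
    ![1, 0, 3, 2, 4, 5],
    ![5, 0, 3, 2, 1, 4],
    ![3, 0, 5, 4, 1, 2],
    ![1, 0, 5, 4, 2, 3],
    ![2, 0, 5, 4, 1, 3],
    ![3, 0, 1, 4, 2, 5],
    ![1, 0, 2, 4, 3, 5],
    ![5, 0, 2, 4, 1, 3],
    ![3, 0, 1, 2, 4, 5],
    ![1, 0, 3, 4, 2, 5],
    ![5, 0, 3, 4, 1, 2],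
    ![3, 5, 0, 1, 2, 4],
    ![1, 5, 0, 3, 2, 4],
    ![5, 1, 0, 3, 2, 4],
    ![4, 5, 0, 1, 2, 3],
    ![1, 3, 0, 5, 2, 4],
    ![2, 1, 0, 5, 3, 4],
    ![3, 5, 0, 2, 1, 4],
    ![1, 5, 0, 2, 3, 4],
    ![5, 1, 0, 2, 3, 4],
    ![3, 4, 0, 1, 2, 5],
    ![1, 4, 0, 3, 2, 5],
    ![2, 4, 0, 3, 1, 5],
    ![3, 4, 0, 5, 1, 2],
    ![1, 4, 0, 5, 2, 3],
    ![2, 4, 0, 5, 1, 3],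
    ![3, 4, 0, 2, 1, 5],
    ![1, 4, 0, 2, 3, 5],
    ![5, 4, 0, 2, 1, 3],
    ![3, 2, 0, 1, 4, 5],
    ![1, 2, 0, 3, 4, 5],
    ![5, 2, 0, 3, 1, 4],
    ![3, 2, 0, 5, 1, 4],
    ![1, 2, 0, 5, 3, 4],
    ![2, 1, 0, 4, 3, 5],
    ![3, 2, 0, 4, 1, 5],
    ![1, 2, 0, 4, 3, 5],
    ![5, 2, 0, 4, 1, 3]]

theorem witnessRow_bijective : ∀ a, Function.Bijective (witnessRow a) := by decide +kernel

noncomputable def witness (a : Fin (3 ^ 4)) : Equiv.Perm (Fin 6) :=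
  Equiv.ofBijective _ (witnessRow_bijective a)

theorem hammingDist_le_witness : ∀ a b : Fin (3 ^ 4),
    hammingDist (finFunctionFinEquiv.symm a : Fin 4 → Fin 3) (finFunctionFinEquiv.symm b) ≤
      #{i : Fin 6 | (i : ℕ) < 4 ∧ witness a i ≠ witness b i} := by
  decide +kernel

theorem exists_witness_eq_zero : ∀ a, ∃ i : Fin 6, (i : ℕ) < 3 ∧ witness a i = 0 := by
  decide +kernel

theorem stmt_10 :
    ∃ H : (Fin 4 → Fin 3) → Equiv.Perm (Fin 6),
      Function.Injective H ∧
      (∀ u, ∃ i : Fin 6, (i : ℕ) < 3 ∧ ((H u i : Fin 6) : ℕ) + 1 = 1) ∧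
      (∀ u v : Fin 4 → Fin 3, u ≠ v →
        hammingDist u v ≤
          (Finset.univ.filter fun i : Fin 6 => (i : ℕ) < 4 ∧ H u i ≠ H v i).card) := by
  have hdist (u v : Fin 4 → Fin 3) : hammingDist u v ≤
      #{i : Fin 6 | (i : ℕ) < 4 ∧ witness (finFunctionFinEquiv u) i ≠
        witness (finFunctionFinEquiv v) i} := by
    simpa using hammingDist_le_witness (finFunctionFinEquiv u) (finFunctionFinEquiv v)
  refine ⟨fun u => witness (finFunctionFinEquiv u), ?_, ?_, fun u v _ => hdist u v⟩
  · intro u v huv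
    by_contra hne
    exact ne_of_hammingDist_le_card_filter hne (hdist u v) (congrArg DFunLike.coe huv)
  · intro u
    obtain ⟨i, hi, hzero⟩ := exists_witness_eq_zero (finFunctionFinEquiv u)
    exact ⟨i, hi, by simp [hzero]⟩
end

section
/- For every n ≥ 3 there exists a distance-increasing mapping from Z_3^n to S_{n+2}, i.e., an injective f : Z_3^n → S_{n+2} with d_H(f(x),f(y)) > d_H(x,y) for all distinct x, y ∈ Z_3^n. -/
/-!
Induction on `n`. Given a distance-increasing `f : ℤ₃ⁿ → S_{n+2}` and points `p, q` with
`f x p ≠ q` for all `x`, a vector `(x, a) ∈ ℤ₃ⁿ⁺¹` is sent to the extension of `f x` by a new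
fixed point `∞` (here `none`), composed with nothing (`a = 0`), with the transposition `(∞ q)`
on the left (`a = 1`) or with `(p ∞)` on the right (`a = 2`). If the last coordinates agree,
the distance is that of `f`. If they differ, the images additionally differ at `∞`, and when
the first `n` coordinates agree the images are distinct permutations, which never differ in
exactly one place. The new map again avoids `p ↦ q`, and an explicit map `ℤ₃³ → S₅` starts
the induction.
-/

open Equiv Function

section Hamming

variable {ι κ β : Type*} [Fintype ι] [Fintype κ] [DecidableEq β]

lemma hammingDist_comp_equiv (x y : κ → β) (e : ι ≃ κ) :
    hammingDist (x ∘ e) (y ∘ e) = hammingDist x y :=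
  Finset.card_equiv e (by simp)

lemma hammingDist_option (x y : Option ι → β) :
    hammingDist x y =
      hammingDist (x ∘ some) (y ∘ some) + if x none = y none then 0 else 1 := by
  simp only [hammingDist, Finset.card_filter, Fintype.sum_option, ite_not, comp_apply]
  ring

lemma hammingDist_lt_hammingDist {x y X Y : ι → β} {z : ι} (hz : x z = y z)
    (h : ∀ i, i = z ∨ x i ≠ y i → X i ≠ Y i) : hammingDist x y < hammingDist X Y := by
  refine Finset.card_lt_card ((Finset.ssubset_iff_of_subset ?_).2 ⟨z, ?_, ?_⟩)
  · intro i
    simpa using h i ∘ Or.inr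
  all_goals simp_all

end Hamming

namespace Equiv.Perm

variable {α β : Type*} [Fintype α] [DecidableEq α] [Fintype β] [DecidableEq β]

lemma hammingDist_eq_card_support (σ τ : Perm α) :
    hammingDist ⇑σ ⇑τ = (τ⁻¹ * σ).support.card := by
  simp only [hammingDist, Perm.support, Perm.coe_mul, comp_apply, ne_eq, Perm.inv_eq_iff_eq]

lemma hammingDist_ne_one (σ τ : Perm α) : hammingDist ⇑σ ⇑τ ≠ 1 := by
  rw [hammingDist_eq_card_support]
  exact card_support_ne_one _

lemma hammingDist_mul_mul (σ π ρ τ : Perm α) :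
    hammingDist ⇑(σ * π * τ) ⇑(σ * ρ * τ) = hammingDist ⇑π ⇑ρ := by
  simp only [coe_mul]
  rw [hammingDist_comp_equiv (σ ∘ π) (σ ∘ ρ) τ]
  exact hammingDist_comp (fun _ => σ) fun _ => σ.injective

lemma hammingDist_optionCongr (σ τ : Perm α) :
    hammingDist ⇑(optionCongr σ) ⇑(optionCongr τ) = hammingDist ⇑σ ⇑τ := by
  rw [hammingDist_option]
  simp only [optionCongr_apply, Option.map_none, if_true, add_zero]
  exact hammingDist_comp (fun _ => some) fun _ => Option.some_injective α

lemma hammingDist_permCongr (e : α ≃ β) (σ τ : Perm α) :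
    hammingDist ⇑(e.permCongr σ) ⇑(e.permCongr τ) = hammingDist ⇑σ ⇑τ := by
  rw [← hammingDist_comp_equiv σ τ e.symm]
  exact hammingDist_comp (fun _ => e) fun _ => e.injective

end Equiv.Perm

section DistIncreasing

variable {ι κ α β : Type*} [Fintype ι] [Fintype κ] [Fintype α] [DecidableEq α]
  [Fintype β] [DecidableEq β]

def IsDistIncreasing (f : (ι → Fin 3) → Perm α) : Prop :=
  ∀ x y, x ≠ y → hammingDist x y < hammingDist ⇑(f x) ⇑(f y)

namespace IsDistIncreasing

variable {f : (ι → Fin 3) → Perm α}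

lemma injective (hf : IsDistIncreasing f) : Injective f := by
  intro x y hxy
  by_contra hne
  simpa [hxy] using hf x y hne

lemma permCongr (hf : IsDistIncreasing f) (e : ι ≃ κ) (e' : α ≃ β) :
    IsDistIncreasing fun y : κ → Fin 3 => e'.permCongr (f (y ∘ e)) := by
  intro x y hxy
  rw [Perm.hammingDist_permCongr, ← hammingDist_comp_equiv x y e]
  exact hf _ _ (e.surjective.injective_comp_right.ne hxy)

end IsDistIncreasing

end DistIncreasing

section extendOption

variable {ι α : Type*} [DecidableEq α]

def extendOption (f : (ι → Fin 3) → Perm α) (p q : α) (x : Option ι → Fin 3) :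
    Perm (Option α) :=
  ![1, swap none (some q), 1] (x none) * optionCongr (f (x ∘ some)) *
    ![1, 1, swap (some p) none] (x none)

variable {f : (ι → Fin 3) → Perm α} {p q : α}

lemma extendOption_apply_some_ne (hpq : ∀ x, f x p ≠ q) (x : Option ι → Fin 3) :
    extendOption f p q x (some p) ≠ some q := by
  have := hpq (x ∘ some)
  unfold extendOption
  generalize x none = a
  fin_cases a <;> simp [swap_apply_def, this]

/- At `none` the three possible values `none`, `some q`, `some (f _ p)` are pairwise distinct.
At `some j` each side is `none` or `some (f _ j)`, and both are `none` only if `f _ p = q`. -/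
lemma extendOption_apply_ne_apply (hpq : ∀ x, f x p ≠ q) {x y : Option ι → Fin 3}
    (hxy : x none ≠ y none) (i : Option α)
    (hi : i = none ∨ optionCongr (f (x ∘ some)) i ≠ optionCongr (f (y ∘ some)) i) :
    extendOption f p q x i ≠ extendOption f p q y i := by
  have hx := hpq (x ∘ some)
  have hy := hpq (y ∘ some)
  unfold extendOption
  generalize x none = a, y none = b at *
  rcases i with _ | j <;> fin_cases a <;> fin_cases b <;>
    simp [swap_apply_def] at hi hxy ⊢ <;> grind

theorem isDistIncreasing_extendOption [Fintype ι] [Fintype α] (hf : IsDistIncreasing f)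
    (hpq : ∀ x, f x p ≠ q) : IsDistIncreasing (extendOption f p q) := by
  intro x y hxy
  rw [hammingDist_option]
  by_cases hlast : x none = y none
  · have hxy' : x ∘ some ≠ y ∘ some := fun h =>
      hxy (funext fun i => by cases i; exacts [hlast, congrFun h _])
    rw [if_pos hlast, add_zero, extendOption, extendOption, hlast,
      Perm.hammingDist_mul_mul, Perm.hammingDist_optionCongr]
    exact hf _ _ hxy'
  · have hlt := hammingDist_lt_hammingDist (z := none) (by simp)
      (extendOption_apply_ne_apply hpq hlast (x := x) (y := y))
    rw [Perm.hammingDist_optionCongr] at hlt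
    rw [if_neg hlast]
    rcases eq_or_ne (x ∘ some) (y ∘ some) with h | h
    · rw [h, hammingDist_self] at hlt ⊢
      have := Perm.hammingDist_ne_one (extendOption f p q x) (extendOption f p q y)
      omega
    · have := hf _ _ h
      omega

end extendOption

def baseMap (x : Fin 3 → Fin 3) : Fin 5 → Fin 5 :=
  ![![![![3,1,4,2,0], ![4,1,0,3,2], ![3,4,1,2,0]],
     ![![3,1,4,0,2], ![4,2,3,0,1], ![3,2,4,0,1]],
     ![![2,1,3,0,4], ![4,0,3,2,1], ![2,1,3,4,0]]],
    ![![![3,1,0,2,4], ![4,1,0,2,3], ![3,2,1,4,0]],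
     ![![3,2,0,1,4], ![4,3,2,0,1], ![4,3,2,1,0]],
     ![![2,3,0,4,1], ![4,3,0,2,1], ![3,0,2,4,1]]],
    ![![![0,2,1,3,4], ![2,0,4,1,3], ![0,2,1,4,3]],
     ![![0,2,3,1,4], ![0,4,3,1,2], ![0,3,2,1,4]],
     ![![2,0,1,3,4], ![0,4,2,3,1], ![2,4,1,0,3]]]] (x 0) (x 1) (x 2)

set_option maxHeartbeats 1000000 in
lemma baseMap_injective : ∀ x, Injective (baseMap x) := by decide

noncomputable def basePerm (x : Fin 3 → Fin 3) : Perm (Fin 5) :=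
  .ofBijective (baseMap x) (baseMap_injective x).bijective_of_finite

set_option maxHeartbeats 1000000 in
lemma isDistIncreasing_basePerm : IsDistIncreasing basePerm := by
  unfold IsDistIncreasing basePerm
  decide

lemma basePerm_apply_zero_ne_one (x : Fin 3 → Fin 3) : basePerm x 0 ≠ 1 := by
  revert x
  decide

theorem exists_isDistIncreasing (m : ℕ) :
    ∃ f : (Fin (m + 3) → Fin 3) → Perm (Fin (m + 5)),
      IsDistIncreasing f ∧ ∃ p q, ∀ x, f x p ≠ q := by
  induction m with
  | zero => exact ⟨basePerm, isDistIncreasing_basePerm, 0, 1, basePerm_apply_zero_ne_one⟩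
  | succ m ih =>
    obtain ⟨f, hf, p, q, hpq⟩ := ih
    set e := (finSuccEquiv (m + 3)).symm
    set e' := (finSuccEquiv (m + 5)).symm
    refine ⟨fun y => e'.permCongr (extendOption f p q (y ∘ e)),
      (isDistIncreasing_extendOption hf hpq).permCongr e e', e' (some p), e' (some q),
      fun y => ?_⟩
    simpa using extendOption_apply_some_ne hpq (y ∘ e)

theorem stmt_13 (n : ℕ) (hn : 3 ≤ n) :
    ∃ f : (Fin n → Fin 3) → Equiv.Perm (Fin (n + 2)),
      Function.Injective f ∧
      ∀ x y : Fin n → Fin 3, x ≠ y → hammingDist x y < hammingDist ⇑(f x) ⇑(f y) := by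
  obtain ⟨m, rfl⟩ : ∃ m, n = m + 3 := ⟨n - 3, by omega⟩
  obtain ⟨f, hf, -⟩ := exists_isDistIncreasing m
  exact ⟨f, hf.injective, hf⟩
end

section
/- Assume that for every n ≥ 3 there exists a distance-increasing mapping from Z_3^n to S_{n+2}. Then for all n ≥ 5 and 2 ≤ d ≤ n, P(n,d) ≥ A_3(n−2, d−1), where P(n,d) is the maximal size of a set of permutations of {1,...,n} with pairwise Hamming distance ≥ d, and A_3(m,d) is the maximal size of a ternary code of length m with minimum distance ≥ d. -/
/-- Maximal size of an (n,d) permutation array. -/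
noncomputable def Pmax (n d : ℕ) : ℕ :=
  sSup {s | ∃ A : Finset (Equiv.Perm (Fin n)),
    (∀ π ∈ A, ∀ σ ∈ A, π ≠ σ → d ≤ hammingDist ⇑π ⇑σ) ∧ A.card = s}

/-- Maximal size of a ternary (m,d) code. -/
noncomputable def A3 (m d : ℕ) : ℕ :=
  sSup {s | ∃ C : Finset (Fin m → Fin 3),
    (∀ c ∈ C, ∀ c' ∈ C, c ≠ c' → d ≤ hammingDist c c') ∧ C.card = s}

/-! A distance-increasing map is injective, so it carries a ternary code of minimum distance
`d - 1` onto an equally large permutation array of minimum distance `d`. -/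

theorem card_le_Pmax {n d : ℕ} (A : Finset (Equiv.Perm (Fin n)))
    (hA : ∀ π ∈ A, ∀ σ ∈ A, π ≠ σ → d ≤ hammingDist ⇑π ⇑σ) : A.card ≤ Pmax n d := by
  refine le_csSup ⟨Fintype.card (Equiv.Perm (Fin n)), ?_⟩ ⟨A, hA, rfl⟩
  rintro _ ⟨B, -, rfl⟩
  exact Finset.card_le_univ B

theorem A3_le_of_forall_card_le {m d k : ℕ}
    (hk : ∀ C : Finset (Fin m → Fin 3),
      (∀ c ∈ C, ∀ c' ∈ C, c ≠ c' → d ≤ hammingDist c c') → C.card ≤ k) : A3 m d ≤ k := by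
  refine csSup_le ⟨0, ∅, by simp⟩ ?_
  rintro _ ⟨C, hC, rfl⟩
  exact hk C hC

theorem A3_pred_le_Pmax_of_hammingDist_lt {m n d : ℕ}
    (f : (Fin m → Fin 3) → Equiv.Perm (Fin n))
    (hf : ∀ x y : Fin m → Fin 3, x ≠ y → hammingDist x y < hammingDist ⇑(f x) ⇑(f y)) :
    A3 m (d - 1) ≤ Pmax n d := by
  have hinj : Function.Injective f := fun x y hxy => by
    by_contra hne
    simpa [hxy] using hf x y hne
  refine A3_le_of_forall_card_le fun C hC => ?_
  rw [← Finset.card_image_of_injective C hinj]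
  refine card_le_Pmax _ ?_
  simp only [Finset.mem_image]
  rintro _ ⟨x, hx, rfl⟩ _ ⟨y, hy, rfl⟩ hne
  have hxy : x ≠ y := fun e => hne (congrArg f e)
  have := hC x hx y hy hxy
  have := hf x y hxy
  omega

theorem stmt_16
    (h : ∀ n : ℕ, 3 ≤ n → ∃ f : (Fin n → Fin 3) → Equiv.Perm (Fin (n + 2)),
      Function.Injective f ∧
      ∀ x y : Fin n → Fin 3, x ≠ y → hammingDist x y < hammingDist ⇑(f x) ⇑(f y)) :
    ∀ n d : ℕ, 5 ≤ n → 2 ≤ d → d ≤ n → A3 (n - 2) (d - 1) ≤ Pmax n d := by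
  rintro n d hn - -
  obtain ⟨m, rfl⟩ : ∃ m, n = m + 2 := ⟨n - 2, by omega⟩
  obtain ⟨f, -, hf⟩ := h m (by omega)
  exact A3_pred_le_Pmax_of_hammingDist_lt f hf
end
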